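/- arXiv:1011.2244 — 2 statements merged into one kernel-verified Lean document; each statement's English description precedes it below -/
import Mathlib

section
/- Let ū : ℝ^d → ℝ be continuous and ℤ^d-periodic with T^a_t ū = ū for all t ≥ 0. Then for every continuous ℤ^d-periodic function u : ℝ^d → ℝ and every t ≥ 0, sup_{x ∈ ℝ^d} |T̃^a_t u(x) − ū(x)| ≤ sup_{x ∈ ℝ^d} |T^a_t u(x) − ū(x)|. -/
open Set Filter

noncomputable section

/-- Euclidean space `ℝ^d`. -/
abbrev Ed (d : ℕ) := EuclideanSpace ℝ (Fin d)

/-- The vector in `ℝ^d` with integer coordinates `k`. -/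
def intVec (d : ℕ) (k : Fin d → ℤ) : Ed d := WithLp.toLp 2 (fun i => (k i : ℝ))

/-- `u : ℝ^d → ℝ` is `ℤ^d`-periodic. -/
def IsZdPeriodic {d : ℕ} (u : Ed d → ℝ) : Prop :=
  ∀ (x : Ed d) (k : Fin d → ℤ), u (x + intVec d k) = u x

/-- `γ` is continuous and piecewise `C¹` on `[a, b]`. -/
def PiecewiseC1On {d : ℕ} (γ : ℝ → Ed d) (a b : ℝ) : Prop :=
  ContinuousOn γ (Set.Icc a b) ∧
  ∃ (n : ℕ) (T : Fin (n + 1) → ℝ), T 0 = a ∧ T (Fin.last n) = b ∧ Monotone T ∧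
    ∀ i : Fin n, ContDiffOn ℝ 1 γ (Set.Icc (T i.castSucc) (T i.succ))

/-- The standing hypotheses on the autonomous Tonelli Lagrangian `La`:
`C²` smoothness, `ℤ^d`-periodicity in `x`, positive definiteness of the Hessian
`∂²La/∂v²`, and superlinear growth in `v`. -/
def TonelliAut {d : ℕ} (La : Ed d → Ed d → ℝ) : Prop :=
  ContDiff ℝ 2 (fun p : Ed d × Ed d => La p.1 p.2) ∧
  (∀ (x v : Ed d) (k : Fin d → ℤ), La (x + intVec d k) v = La x v) ∧
  (∀ x v w : Ed d, w ≠ 0 → 0 < iteratedFDeriv ℝ 2 (fun v' => La x v') v ![w, w]) ∧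
  (∀ A : ℝ, 0 ≤ A → ∃ B : ℝ, ∀ x v : Ed d, A * ‖v‖ - B ≤ La x v)

/-- The action of the curve `γ : [a,b] → ℝ^d` for the autonomous Lagrangian `La`. -/
def actionA {d : ℕ} (La : Ed d → Ed d → ℝ) (γ : ℝ → Ed d) (a b : ℝ) : ℝ :=
  ∫ s in a..b, La (γ s) (deriv γ s)

/-- The Lax–Oleinik semigroup `Tᵃ_t u (x)`: `Tᵃ_0 u = u` and, for `t > 0`, the infimum of
`u(γ(0)) + ∫₀^t La(γ,γ') ds` over continuous piecewise `C¹` curves ending at `x`. -/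
def LOa {d : ℕ} (La : Ed d → Ed d → ℝ) (u : Ed d → ℝ) (t : ℝ) (x : Ed d) : ℝ :=
  if t = 0 then u x
  else sInf {r | ∃ γ : ℝ → Ed d, PiecewiseC1On γ 0 t ∧ γ t = x ∧
    r = u (γ 0) + actionA La γ 0 t}

/-- The new Lax–Oleinik operator `T̃ᵃ_t u (x) = inf_{σ ∈ [t,2t]} Tᵃ_σ u (x)`. -/
def LOnew {d : ℕ} (La : Ed d → Ed d → ℝ) (u : Ed d → ℝ) (t : ℝ) (x : Ed d) : ℝ :=
  sInf {r | ∃ σ : ℝ, t ≤ σ ∧ σ ≤ 2 * t ∧ r = LOa La u σ x}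

/-! Let `c = ‖Tᵃ_t u - ū‖_∞` and `σ ≥ t`. A curve on `[0, σ]` ending at `x`, split at time `t`,
costs at least `Tᵃ_t u (γ t) ≥ ū (γ t) - c` on its first piece and, since `ū` is a fixed point,
at least `Tᵃ_{σ-t} ū x - ū (γ t) = ū x - ū (γ t)` on the second. Hence `Tᵃ_σ u ≥ ū - c` for all
`σ ≥ t`, so `T̃ᵃ_t u ≥ ū - c`, while `T̃ᵃ_t u ≤ Tᵃ_t u ≤ ū + c`. Continuity and periodicity bound
`u`, `ū` and `La (·, 0)`, which keeps all the infima and the supremum finite. -/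

open MeasureTheory

theorem contDiffOn_singleton {𝕜 E F : Type*} [NontriviallyNormedField 𝕜]
    [NormedAddCommGroup E] [NormedSpace 𝕜 E] [NormedAddCommGroup F] [NormedSpace 𝕜 F]
    {n : WithTop ℕ∞} {f : E → F} {x : E} : ContDiffOn 𝕜 n f {x} :=
  fun _ hy => hy ▸ contDiffWithinAt_singleton

theorem ContDiffOn.intervalIntegrable_comp_deriv {E : Type*} [NormedAddCommGroup E]
    [NormedSpace ℝ E] {L : E → E → ℝ} (hL : Continuous fun p : E × E => L p.1 p.2)
    {γ : ℝ → E} {a b : ℝ} (hab : a ≤ b) (hγ : ContDiffOn ℝ 1 γ (Icc a b)) :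
    IntervalIntegrable (fun s => L (γ s) (deriv γ s)) volume a b := by
  rcases hab.eq_or_lt with rfl | hlt
  · exact IntervalIntegrable.refl
  have hwithin : IntervalIntegrable (fun s => L (γ s) (derivWithin γ (Icc a b) s)) volume a b := by
    refine ContinuousOn.intervalIntegrable ?_
    rw [uIcc_of_le hab]
    exact hL.comp_continuousOn
      (hγ.continuousOn.prodMk (hγ.continuousOn_derivWithin (uniqueDiffOn_Icc hlt) le_rfl))
  rw [intervalIntegrable_iff_integrableOn_Ioo_of_le hab] at hwithin ⊢
  refine hwithin.congr_fun (fun s hs => ?_) measurableSet_Ioo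
  simp only [derivWithin_of_mem_nhds (Icc_mem_nhds hs.1 hs.2)]

variable {d : ℕ}

theorem IsZdPeriodic.exists_abs_le {u : Ed d → ℝ} (hper : IsZdPeriodic u) (hu : Continuous u) :
    ∃ M, ∀ x, |u x| ≤ M := by
  let e := EuclideanSpace.equiv (Fin d) ℝ
  have hcube : IsCompact (e ⁻¹' pi univ fun _ => Icc (0 : ℝ) 1) :=
    e.toHomeomorph.isCompact_preimage.2 (isCompact_univ_pi fun _ => isCompact_Icc)
  obtain ⟨M, hM⟩ := hcube.exists_bound_of_continuousOn hu.continuousOn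
  refine ⟨M, fun x => ?_⟩
  let k : Fin d → ℤ := fun i => ⌊x i⌋
  have hx : x - intVec d k + intVec d k = x := sub_add_cancel _ _
  have hfract : x - intVec d k ∈ e ⁻¹' pi univ fun _ => Icc (0 : ℝ) 1 := fun i _ => by
    change x i - ⌊x i⌋ ∈ Icc (0 : ℝ) 1
    rw [Int.self_sub_floor]
    exact ⟨Int.fract_nonneg _, (Int.fract_lt_one _).le⟩
  rw [← hx, hper]
  exact hM _ hfract

namespace PiecewiseC1On

theorem const (x : Ed d) {a b : ℝ} (hab : a ≤ b) : PiecewiseC1On (fun _ => x) a b := by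
  refine ⟨continuousOn_const, 1, ![a, b], rfl, rfl, ?_, fun _ => contDiffOn_const⟩
  rw [Fin.monotone_iff_le_succ]
  intro i
  fin_cases i
  simpa using hab

variable {γ : ℝ → Ed d} {a b : ℝ}

theorem mono (h : PiecewiseC1On γ a b) {a' b' : ℝ} (ha : a ≤ a') (hab' : a' ≤ b') (hb : b' ≤ b) :
    PiecewiseC1On γ a' b' := by
  obtain ⟨hcont, n, T, hT0, hTl, hmono, hpc⟩ := h
  refine ⟨hcont.mono (Icc_subset_Icc ha hb), n, fun i => max a' (min (T i) b'),
    by simp [hT0, ha], by simp [hTl, hb, hab'],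
    fun i j hij => max_le_max le_rfl (min_le_min (hmono hij) le_rfl), fun i => ?_⟩
  dsimp only
  have hTi : T i.castSucc ≤ T i.succ := hmono (Fin.castSucc_le_succ i)
  rcases lt_or_ge (T i.succ) a' with hlt | hle
  · rw [max_eq_left ((min_le_left _ _).trans (hTi.trans hlt.le)),
      max_eq_left ((min_le_left _ _).trans hlt.le), Icc_self]
    exact contDiffOn_singleton
  rcases lt_or_ge b' (T i.castSucc) with hlt' | hle'
  · rw [min_eq_right hlt'.le, min_eq_right (hlt'.le.trans hTi), max_eq_right hab', Icc_self]
    exact contDiffOn_singleton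
  exact (hpc i).mono (Icc_subset_Icc (le_max_of_le_right (le_min le_rfl hle'))
    (max_le hle (min_le_left _ _)))

theorem comp_add_const (h : PiecewiseC1On γ a b) (c : ℝ) :
    PiecewiseC1On (fun s => γ (s + c)) (a - c) (b - c) := by
  obtain ⟨hcont, n, T, hT0, hTl, hmono, hpc⟩ := h
  have hmaps : ∀ a b : ℝ, MapsTo (· + c) (Icc (a - c) (b - c)) (Icc a b) :=
    fun a b s hs => ⟨by linarith [hs.1], by linarith [hs.2]⟩
  have hshift : ContDiff ℝ 1 (· + c) := contDiff_id.add contDiff_const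
  exact ⟨hcont.comp hshift.continuous.continuousOn (hmaps a b), n, fun i => T i - c,
    by simp only [hT0], by simp only [hTl], fun i j hij => sub_le_sub_right (hmono hij) c,
    fun i => (hpc i).comp hshift.contDiffOn (hmaps _ _)⟩

theorem intervalIntegrable {L : Ed d → Ed d → ℝ} (hL : Continuous fun p : Ed d × Ed d => L p.1 p.2)
    (h : PiecewiseC1On γ a b) : IntervalIntegrable (fun s => L (γ s) (deriv γ s)) volume a b := by
  obtain ⟨-, n, T, rfl, rfl, hmono, hpc⟩ := h
  have hprefix : ∀ i : Fin (n + 1),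
      IntervalIntegrable (fun s => L (γ s) (deriv γ s)) volume (T 0) (T i) := by
    intro i
    induction i using Fin.induction with
    | zero => exact IntervalIntegrable.refl
    | succ i ih =>
      exact ih.trans ((hpc i).intervalIntegrable_comp_deriv hL (hmono (Fin.castSucc_le_succ i)))
  exact hprefix (Fin.last n)

end PiecewiseC1On

section Action

variable {La : Ed d → Ed d → ℝ} {γ : ℝ → Ed d} {a b c : ℝ}

theorem actionA_const (x : Ed d) : actionA La (fun _ => x) a b = (b - a) * La x 0 := by
  simp [actionA]

theorem actionA_comp_add_const :
    actionA La (fun s => γ (s + c)) a b = actionA La γ (a + c) (b + c) := by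
  simp only [actionA, deriv_comp_add_const]
  exact intervalIntegral.integral_comp_add_right (fun s => La (γ s) (deriv γ s)) c

variable (hL : Continuous fun p : Ed d × Ed d => La p.1 p.2)
include hL

theorem actionA_add_actionA (hγ : PiecewiseC1On γ a c) (hab : a ≤ b) (hbc : b ≤ c) :
    actionA La γ a b + actionA La γ b c = actionA La γ a c :=
  intervalIntegral.integral_add_adjacent_intervals
    ((hγ.mono le_rfl hab hbc).intervalIntegrable hL) ((hγ.mono hab hbc le_rfl).intervalIntegrable hL)

theorem mul_le_actionA {m : ℝ} (hm : ∀ x v, m ≤ La x v) (hγ : PiecewiseC1On γ a b)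
    (hab : a ≤ b) : (b - a) * m ≤ actionA La γ a b := by
  have := intervalIntegral.integral_mono_on hab intervalIntegrable_const
    (hγ.intervalIntegrable hL) fun s _ => hm (γ s) (deriv γ s)
  simpa [actionA] using this

end Action

namespace TonelliAut

variable {La : Ed d → Ed d → ℝ} (hLa : TonelliAut La)
include hLa

theorem continuous_uncurry : Continuous fun p : Ed d × Ed d => La p.1 p.2 :=
  hLa.1.continuous

theorem exists_le : ∃ m, ∀ x v, m ≤ La x v := by
  obtain ⟨B, hB⟩ := hLa.2.2.2 0 le_rfl
  exact ⟨-B, fun x v => by simpa using hB x v⟩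

theorem exists_le_at_zero_velocity : ∃ K, ∀ x, La x 0 ≤ K := by
  have hper : IsZdPeriodic fun x => La x 0 := fun x k => hLa.2.1 x 0 k
  obtain ⟨K, hK⟩ := hper.exists_abs_le (hLa.continuous_uncurry.comp (continuous_id.prodMk continuous_const))
  exact ⟨K, fun x => (le_abs_self _).trans (hK x)⟩

end TonelliAut

section LaxOleinik

variable {La : Ed d → Ed d → ℝ} {w : Ed d → ℝ} {τ : ℝ}

theorem le_LOa {c : ℝ} {x : Ed d} (hτ : 0 ≤ τ)
    (h : ∀ γ, PiecewiseC1On γ 0 τ → γ τ = x → c ≤ w (γ 0) + actionA La γ 0 τ) :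
    c ≤ LOa La w τ x := by
  rcases hτ.eq_or_lt with rfl | hτ
  · simpa [LOa, actionA] using h (fun _ => x) (.const x le_rfl) rfl
  rw [LOa, if_neg hτ.ne']
  exact le_csInf ⟨_, _, .const x hτ.le, rfl, rfl⟩ fun r ⟨γ, hγ, hx, hr⟩ => hr ▸ h γ hγ hx

theorem le_LOnew {c t : ℝ} {x : Ed d} (ht : 0 ≤ t)
    (h : ∀ σ, t ≤ σ → σ ≤ 2 * t → c ≤ LOa La w σ x) : c ≤ LOnew La w t x :=
  le_csInf ⟨_, t, le_rfl, by linarith, rfl⟩ fun r ⟨σ, h₁, h₂, hr⟩ => hr ▸ h σ h₁ h₂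

theorem LOnew_le_LOa {c t : ℝ} {x : Ed d} (ht : 0 ≤ t)
    (h : ∀ σ, t ≤ σ → σ ≤ 2 * t → c ≤ LOa La w σ x) : LOnew La w t x ≤ LOa La w t x :=
  csInf_le ⟨c, fun r ⟨σ, h₁, h₂, hr⟩ => hr ▸ h σ h₁ h₂⟩ ⟨t, le_rfl, by linarith, rfl⟩

variable (hL : Continuous fun p : Ed d × Ed d => La p.1 p.2) {m : ℝ} (hm : ∀ x v, m ≤ La x v)
include hL hm

theorem LOa_le_add_actionA {M : ℝ} (hw : ∀ x, M ≤ w x) (hτ : 0 ≤ τ) {γ : ℝ → Ed d}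
    (hγ : PiecewiseC1On γ 0 τ) : LOa La w τ (γ τ) ≤ w (γ 0) + actionA La γ 0 τ := by
  rcases hτ.eq_or_lt with rfl | hτ
  · simp [LOa, actionA]
  rw [LOa, if_neg hτ.ne']
  refine csInf_le ⟨M + τ * m, ?_⟩ ⟨γ, hγ, rfl, rfl⟩
  rintro r ⟨γ', hγ', -, rfl⟩
  linarith [hw (γ' 0), mul_le_actionA hL hm hγ' hτ.le]

theorem bddAbove_abs_LOa_sub {v : Ed d → ℝ} {Mw Mv K : ℝ} (hw : ∀ x, |w x| ≤ Mw)
    (hv : ∀ x, |v x| ≤ Mv) (hK : ∀ x, La x 0 ≤ K) (hτ : 0 ≤ τ) :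
    BddAbove (Set.range fun y => |LOa La w τ y - v y|) := by
  refine ⟨Mw + Mv + τ * max K (-m), ?_⟩
  rintro _ ⟨y, rfl⟩
  have hwy := abs_le.1 (hw y)
  have hvy := abs_le.1 (hv y)
  have hupper : LOa La w τ y ≤ w y + τ * La y 0 := by
    simpa [actionA_const] using
      LOa_le_add_actionA hL hm (fun x => (abs_le.1 (hw x)).1) hτ (.const y hτ)
  have hlower : -Mw + τ * m ≤ LOa La w τ y := le_LOa hτ fun γ hγ _ => by
    linarith [(abs_le.1 (hw (γ 0))).1, mul_le_actionA hL hm hγ hτ]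
  have hK' : τ * La y 0 ≤ τ * max K (-m) :=
    mul_le_mul_of_nonneg_left ((hK y).trans (le_max_left _ _)) hτ
  have hm' : τ * -m ≤ τ * max K (-m) := mul_le_mul_of_nonneg_left (le_max_right _ _) hτ
  rw [abs_le]
  constructor <;> linarith

theorem sub_le_LOa_of_isFixed {u ubar : Ed d → ℝ} {Mu Mb : ℝ} (hu : ∀ x, Mu ≤ u x)
    (hubar : ∀ x, Mb ≤ ubar x) (hfix : ∀ s, 0 ≤ s → ∀ x, LOa La ubar s x = ubar x)
    {c t σ : ℝ} (ht : 0 ≤ t) (htσ : t ≤ σ) (hc : ∀ y, ubar y - c ≤ LOa La u t y) (x : Ed d) :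
    ubar x - c ≤ LOa La u σ x := by
  refine le_LOa (ht.trans htσ) fun γ hγ hx => ?_
  have hfirst : LOa La u t (γ t) ≤ u (γ 0) + actionA La γ 0 t :=
    LOa_le_add_actionA hL hm hu ht (hγ.mono le_rfl ht htσ)
  have hsecond : ubar x ≤ ubar (γ t) + actionA La γ t σ := by
    have hshift : PiecewiseC1On (fun s => γ (s + t)) 0 (σ - t) := by
      simpa using (hγ.mono ht htσ le_rfl).comp_add_const t
    simpa [hx, hfix (σ - t) (sub_nonneg.2 htσ), actionA_comp_add_const] using
      LOa_le_add_actionA hL hm hubar (sub_nonneg.2 htσ) hshift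
  rw [← actionA_add_actionA hL hγ ht htσ]
  linarith [hc (γ t)]

end LaxOleinik

theorem LOnew_faster_general
    {d : ℕ} (La : Ed d → Ed d → ℝ) (hLa : TonelliAut La)
    (u : Ed d → ℝ) (hu : Continuous u) (huper : IsZdPeriodic u)
    (ubar : Ed d → ℝ) (hubarc : Continuous ubar) (hubarper : IsZdPeriodic ubar)
    (hfix : ∀ t : ℝ, 0 ≤ t → ∀ x : Ed d, LOa La ubar t x = ubar x) :
    ∀ t : ℝ, 0 ≤ t → ∀ x : Ed d,
      |LOnew La u t x - ubar x| ≤ ⨆ y : Ed d, |LOa La u t y - ubar y| := by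
  intro t ht x
  have hL := hLa.continuous_uncurry
  obtain ⟨m, hm⟩ := hLa.exists_le
  obtain ⟨K, hK⟩ := hLa.exists_le_at_zero_velocity
  obtain ⟨Mu, hMu⟩ := huper.exists_abs_le hu
  obtain ⟨Mb, hMb⟩ := hubarper.exists_abs_le hubarc
  set c := ⨆ y : Ed d, |LOa La u t y - ubar y|
  have hc : ∀ y, |LOa La u t y - ubar y| ≤ c :=
    le_ciSup (bddAbove_abs_LOa_sub hL hm hMu hMb hK ht)
  have hlower : ∀ σ, t ≤ σ → σ ≤ 2 * t → ubar x - c ≤ LOa La u σ x := fun σ htσ _ =>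
    sub_le_LOa_of_isFixed hL hm (fun y => neg_le_of_abs_le (hMu y))
      (fun y => neg_le_of_abs_le (hMb y)) hfix ht htσ
      (fun y => by linarith [(abs_le.1 (hc y)).1]) x
  rw [abs_le]
  constructor
  · linarith [le_LOnew ht hlower]
  · linarith [LOnew_le_LOa ht hlower, (abs_le.1 (hc x)).2]

/-- if `ū` is a fixed point of the Lax–Oleinik semigroup, then
`‖T̃ᵃ_t u − ū‖_∞ ≤ ‖Tᵃ_t u − ū‖_∞` for all `t ≥ 0`: the new semigroup converges faster. -/
theorem LOnew_faster
    {d : ℕ} (hd : 1 ≤ d) (La : Ed d → Ed d → ℝ) (hLa : TonelliAut La)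
    (u : Ed d → ℝ) (hu : Continuous u) (huper : IsZdPeriodic u)
    (ubar : Ed d → ℝ) (hubarc : Continuous ubar) (hubarper : IsZdPeriodic ubar)
    (hfix : ∀ t : ℝ, 0 ≤ t → ∀ x : Ed d, LOa La ubar t x = ubar x) :
    ∀ t : ℝ, 0 ≤ t → ∀ x : Ed d,
      |LOnew La u t x - ubar x| ≤ ⨆ y : Ed d, |LOa La u t y - ubar y| :=
  LOnew_faster_general La hLa u hu huper ubar hubarc hubarper hfix
end
end

section
/- For every continuous ℤ^d-periodic function u : ℝ^d → ℝ and every x ∈ ℝ^d, lim_{t → +∞} T^a_t u(x) = min_{y ∈ ℝ^d} u(y) (the minimum exists by periodicity and continuity). -/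
open Set Filter

noncomputable section

/-!
`L¹ₐ x` is convex and vanishes to second order at `v = ω`, so it is nonnegative and
`Tᵃ_t u ≥ min u`. Conversely, translate a minimiser of `u` by an integer vector to a point `y`
within `√d` of `x - tω`: the straight line from `y` to `x` in time `t` has velocity within
`√d / t` of `ω`, and `L¹ₐ(z, v) = O(‖v - ω‖²)` uniformly in `z` (periodicity bounds `A`),
so its action is `O(1 / t)`.
-/

theorem exists_norm_sub_intVec_le_sqrt {d : ℕ} (z : Ed d) :
    ∃ k : Fin d → ℤ, ‖z - intVec d k‖ ≤ Real.sqrt d := by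
  refine ⟨fun i => ⌊z i⌋, ?_⟩
  rw [EuclideanSpace.norm_eq]
  refine Real.sqrt_le_sqrt ?_
  calc ∑ i, ‖(z - intVec d fun j => ⌊z j⌋) i‖ ^ 2 ≤ ∑ _i : Fin d, (1 : ℝ) := by
        refine Finset.sum_le_sum fun i _ => ?_
        have hfract : (z - intVec d fun j => ⌊z j⌋) i = Int.fract (z i) := by simp [intVec]
        rw [hfract, Real.norm_eq_abs, sq_abs]
        nlinarith [Int.fract_nonneg (z i), Int.fract_lt_one (z i)]
    _ = d := by simp

theorem IsZdPeriodic.image_closedBall_eq_range {d : ℕ} {u : Ed d → ℝ} (hu : IsZdPeriodic u) :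
    u '' Metric.closedBall 0 (Real.sqrt d) = range u := by
  refine (image_subset_range _ _).antisymm ?_
  rintro _ ⟨z, rfl⟩
  obtain ⟨k, hk⟩ := exists_norm_sub_intVec_le_sqrt z
  refine ⟨z - intVec d k, by simpa using hk, ?_⟩
  simpa using (hu (z - intVec d k) k).symm

theorem IsZdPeriodic.isCompact_range {d : ℕ} {u : Ed d → ℝ} (hu : IsZdPeriodic u)
    (hc : Continuous u) : IsCompact (range u) :=
  hu.image_closedBall_eq_range ▸ (isCompact_closedBall _ _).image hc

theorem IsZdPeriodic.exists_forall_le {d : ℕ} {u : Ed d → ℝ} (hu : IsZdPeriodic u)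
    (hc : Continuous u) : ∃ y, ∀ z, u y ≤ u z := by
  obtain ⟨_, ⟨y, rfl⟩, hy⟩ := (hu.isCompact_range hc).exists_isLeast (range_nonempty u)
  exact ⟨y, fun z => hy ⟨z, rfl⟩⟩

section Convexity

variable {E : Type*} [NormedAddCommGroup E] [NormedSpace ℝ E]

/-- Along the segment from `a` to `v`, the derivative of `F` vanishes at `a` and is monotone,
so `F` is monotone on it. -/
theorem le_of_hasFDerivAt_zero_of_iteratedFDeriv_two_nonneg {F : E → ℝ} (hF : ContDiff ℝ 2 F)
    (hF2 : ∀ z w, 0 ≤ iteratedFDeriv ℝ 2 F z ![w, w]) {a : E}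
    (ha : HasFDerivAt F (0 : E →L[ℝ] ℝ) a) (v : E) : F a ≤ F v := by
  set w := v - a
  have hline : ∀ s : ℝ, HasDerivAt (fun s : ℝ => a + s • w) w s := fun s => by
    simpa using ((hasDerivAt_id s).smul_const w).const_add a
  have hg : ∀ s : ℝ, HasDerivAt (fun s => F (a + s • w)) (fderiv ℝ F (a + s • w) w) s :=
    fun s => ((hF.differentiable two_ne_zero _).hasFDerivAt).comp_hasDerivAt s (hline s)
  have hg' : ∀ s : ℝ, HasDerivAt (fun s => fderiv ℝ F (a + s • w) w)
      (iteratedFDeriv ℝ 2 F (a + s • w) ![w, w]) s := fun s => by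
    have hdF : Differentiable ℝ (fderiv ℝ F) :=
      (hF.fderiv_right (m := 1) le_rfl).differentiable one_ne_zero
    rw [iteratedFDeriv_two_apply]
    simpa using ((hdF _).hasFDerivAt.comp_hasDerivAt s (hline s)).clm_apply (hasDerivAt_const s w)
  have hg'_mono : Monotone fun s => fderiv ℝ F (a + s • w) w :=
    monotone_of_deriv_nonneg (fun s => (hg' s).differentiableAt) fun s => (hg' s).deriv ▸ hF2 _ _
  have hg_mono : MonotoneOn (fun s : ℝ => F (a + s • w)) (Ici 0) := by
    refine monotoneOn_of_deriv_nonneg (convex_Ici 0)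
      (fun s _ => (hg s).continuousAt.continuousWithinAt)
      (fun s _ => (hg s).differentiableAt.differentiableWithinAt) fun s hs => ?_
    rw [(hg s).deriv]
    have h0 := hg'_mono (interior_subset hs : (0 : ℝ) ≤ s)
    simpa [ha.fderiv] using h0
  simpa [w] using hg_mono self_mem_Ici (zero_le_one' ℝ)

end Convexity

section Lagrangian

variable {X E : Type*} [NormedAddCommGroup E] [InnerProductSpace ℝ E]
  {ω : E} {A : X → E →L[ℝ] E} {f : X → E → ℝ} {L : X → E → ℝ} {C₀ δ₀ : ℝ}

theorem lagrangian_abs_le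
    (hL : ∀ x v, L x v = (1 / 2 : ℝ) * (inner ℝ (A x (v - ω)) (v - ω) : ℝ) + f x (v - ω))
    (hfcube : ∀ x w, ‖w‖ ≤ δ₀ → |f x w| ≤ C₀ * ‖w‖ ^ 3) (hC₀ : 0 ≤ C₀)
    (x : X) {v : E} (hv : ‖v - ω‖ ≤ δ₀) :
    |L x v| ≤ (‖A x‖ / 2 + C₀ * δ₀) * ‖v - ω‖ ^ 2 := by
  set w := v - ω
  have hquad : |(inner ℝ (A x w) w : ℝ)| ≤ ‖A x‖ * ‖w‖ ^ 2 :=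
    calc |(inner ℝ (A x w) w : ℝ)| ≤ ‖A x w‖ * ‖w‖ := abs_real_inner_le_norm _ _
      _ ≤ ‖A x‖ * ‖w‖ * ‖w‖ := by gcongr; exact (A x).le_opNorm w
      _ = ‖A x‖ * ‖w‖ ^ 2 := by ring
  have hcube : |f x w| ≤ C₀ * δ₀ * ‖w‖ ^ 2 :=
    calc |f x w| ≤ C₀ * ‖w‖ ^ 3 := hfcube x w hv
      _ = C₀ * ‖w‖ * ‖w‖ ^ 2 := by ring
      _ ≤ C₀ * δ₀ * ‖w‖ ^ 2 := by gcongr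
  rw [hL]
  calc |(1 / 2 : ℝ) * (inner ℝ (A x w) w : ℝ) + f x w|
      ≤ 1 / 2 * |(inner ℝ (A x w) w : ℝ)| + |f x w| := by
        grw [abs_add_le, abs_mul, abs_of_pos one_half_pos]
    _ ≤ (‖A x‖ / 2 + C₀ * δ₀) * ‖w‖ ^ 2 := by linarith

theorem lagrangian_nonneg
    (hL : ∀ x v, L x v = (1 / 2 : ℝ) * (inner ℝ (A x (v - ω)) (v - ω) : ℝ) + f x (v - ω))
    (hf : ∀ x, ContDiff ℝ 2 (f x))
    (hfcube : ∀ x w, ‖w‖ ≤ δ₀ → |f x w| ≤ C₀ * ‖w‖ ^ 3) (hC₀ : 0 ≤ C₀) (hδ₀ : 0 < δ₀)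
    (hpos : ∀ x v w, w ≠ 0 → 0 < iteratedFDeriv ℝ 2 (fun v' => L x v') v ![w, w])
    (x : X) (v : E) : 0 ≤ L x v := by
  have hsmall : L x =O[nhds ω] fun v => ‖v - ω‖ ^ 2 := by
    refine Asymptotics.IsBigO.of_bound (‖A x‖ / 2 + C₀ * δ₀) ?_
    filter_upwards [Metric.closedBall_mem_nhds ω hδ₀] with v hv
    simpa using lagrangian_abs_le hL hfcube hC₀ x (mem_closedBall_iff_norm.mp hv)
  have hcontDiff : ContDiff ℝ 2 fun v => L x v := by
    simp_rw [hL]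
    have hsub : ContDiff ℝ 2 fun v : E => v - ω := contDiff_id.sub contDiff_const
    exact (contDiff_const.mul (((A x).contDiff.comp hsub).inner ℝ hsub)).add ((hf x).comp hsub)
  have hhess : ∀ z w, 0 ≤ iteratedFDeriv ℝ 2 (fun v' => L x v') z ![w, w] := by
    intro z w
    rcases eq_or_ne w 0 with rfl | hw
    · simp [show ![(0 : E), 0] = 0 from funext fun i => by fin_cases i <;> rfl]
    · exact (hpos x z w hw).le
  simpa [hsmall.eq_zero_of_norm_pow two_ne_zero] using
    le_of_hasFDerivAt_zero_of_iteratedFDeriv_two_nonneg hcontDiff hhess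
      (hsmall.hasFDerivAt one_lt_two) v

theorem continuous_uncurry_lagrangian [TopologicalSpace X]
    (hL : ∀ x v, L x v = (1 / 2 : ℝ) * (inner ℝ (A x (v - ω)) (v - ω) : ℝ) + f x (v - ω))
    (hA : Continuous A) (hf : Continuous (Function.uncurry f)) :
    Continuous (Function.uncurry L) := by
  have hsub : Continuous fun p : X × E => p.2 - ω := continuous_snd.sub continuous_const
  have hL' : Function.uncurry L = fun p : X × E =>
      (1 / 2 : ℝ) * (inner ℝ (A p.1 (p.2 - ω)) (p.2 - ω) : ℝ) + f p.1 (p.2 - ω) :=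
    funext fun p => hL p.1 p.2
  rw [hL']
  exact (continuous_const.mul (((hA.comp continuous_fst).clm_apply hsub).inner hsub)).add
    (hf.comp (continuous_fst.prodMk hsub))

end Lagrangian

section LaxOleinik

variable {d : ℕ} {La : Ed d → Ed d → ℝ} {u : Ed d → ℝ} {m t : ℝ} {x : Ed d}

theorem piecewiseC1On_line (y v : Ed d) (ht : 0 ≤ t) :
    PiecewiseC1On (fun s : ℝ => y + s • v) 0 t := by
  have hline : ContDiff ℝ 1 fun s : ℝ => y + s • v :=
    contDiff_const.add (contDiff_id.smul contDiff_const)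
  refine ⟨hline.continuous.continuousOn, 1, ![0, t], rfl, rfl, ?_, fun _ => hline.contDiffOn⟩
  intro i j hij
  fin_cases i <;> fin_cases j <;> simp_all

theorem actionA_line (y v : Ed d) (a b : ℝ) :
    actionA La (fun s => y + s • v) a b = ∫ s in a..b, La (y + s • v) v := by
  simp [actionA, deriv_smul_const]

theorem le_add_actionA (hLa : ∀ z v, 0 ≤ La z v) (hm : ∀ y, m ≤ u y) (ht : 0 ≤ t)
    (γ : ℝ → Ed d) : m ≤ u (γ 0) + actionA La γ 0 t :=
  le_add_of_le_of_nonneg (hm _) (intervalIntegral.integral_nonneg ht fun _ _ => hLa _ _)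

theorem le_LOa_s16 (hLa : ∀ z v, 0 ≤ La z v) (hm : ∀ y, m ≤ u y) (ht : 0 ≤ t) :
    m ≤ LOa La u t x := by
  unfold LOa
  split_ifs
  · exact hm x
  · refine le_csInf ⟨_, fun s => x + s • (0 : Ed d), piecewiseC1On_line x 0 ht, by simp, rfl⟩ ?_
    rintro _ ⟨γ, -, -, rfl⟩
    exact le_add_actionA hLa hm ht γ

theorem LOa_le_add_actionA_s16 (hLa : ∀ z v, 0 ≤ La z v) (hm : ∀ y, m ≤ u y) (ht : 0 < t)
    {γ : ℝ → Ed d} (hγ : PiecewiseC1On γ 0 t) (hγt : γ t = x) :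
    LOa La u t x ≤ u (γ 0) + actionA La γ 0 t := by
  rw [LOa, if_neg ht.ne']
  refine csInf_le ⟨m, ?_⟩ ⟨γ, hγ, hγt, rfl⟩
  rintro _ ⟨γ, -, -, rfl⟩
  exact le_add_actionA hLa hm ht.le γ

theorem LOa_le_of_forall_le (hLa : ∀ z v, 0 ≤ La z v) (hLc : Continuous (Function.uncurry La))
    (hm : ∀ y, m ≤ u y) (ht : 0 < t) (y : Ed d) {b : ℝ} (hb : ∀ z, La z (t⁻¹ • (x - y)) ≤ b) :
    LOa La u t x ≤ u y + t * b := by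
  set v := t⁻¹ • (x - y)
  have hγt : y + t • v = x := by simp [v, smul_smul, ht.ne']
  have hcont : Continuous fun s : ℝ => La (y + s • v) v :=
    hLc.comp ((continuous_const.add (continuous_id.smul continuous_const)).prodMk continuous_const)
  calc LOa La u t x ≤ u (y + (0 : ℝ) • v) + actionA La (fun s => y + s • v) 0 t :=
        LOa_le_add_actionA_s16 hLa hm ht (piecewiseC1On_line y v ht.le) hγt
    _ ≤ u y + ∫ _ in (0 : ℝ)..t, b := by
        rw [actionA_line, zero_smul, add_zero]
        gcongr
        exact intervalIntegral.integral_mono_on ht.le (hcont.intervalIntegrable _ _)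
          intervalIntegrable_const fun s _ => hb _
    _ = u y + t * b := by simp

theorem LOa_le_add_div (hLa : ∀ z v, 0 ≤ La z v) (hLc : Continuous (Function.uncurry La))
    (hm : ∀ y, m ≤ u y) {ω : Ed d} {K δ R : ℝ} (hK : 0 ≤ K)
    (hLq : ∀ z v, ‖v - ω‖ ≤ δ → La z v ≤ K * ‖v - ω‖ ^ 2) (ht : 0 < t) (hRt : R ≤ t * δ)
    {y : Ed d} (hy : ‖x - t • ω - y‖ ≤ R) : LOa La u t x ≤ u y + K * R ^ 2 / t := by
  have hv : ‖t⁻¹ • (x - y) - ω‖ ≤ R / t := by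
    have hsub : t⁻¹ • (x - y) - ω = t⁻¹ • (x - t • ω - y) := by
      simp only [smul_sub, smul_smul, inv_mul_cancel₀ ht.ne', one_smul]
      abel
    rw [hsub, norm_smul, norm_inv, Real.norm_of_nonneg ht.le, div_eq_inv_mul]
    gcongr
  calc LOa La u t x ≤ u y + t * (K * (R / t) ^ 2) :=
        LOa_le_of_forall_le hLa hLc hm ht y fun z =>
          (hLq z _ (hv.trans ((div_le_iff₀' ht).2 hRt))).trans (by gcongr)
    _ = u y + K * R ^ 2 / t := by field_simp

end LaxOleinik

theorem LOa_tendsto_min_general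
    {d : ℕ} (ω : Ed d)
    (A : Ed d → Ed d →L[ℝ] Ed d) (hA : ContDiff ℝ 2 A)
    (hAper : ∀ (x : Ed d) (k : Fin d → ℤ), A (x + intVec d k) = A x)
    (f : Ed d → Ed d → ℝ) (hf : ContDiff ℝ 2 (fun p : Ed d × Ed d => f p.1 p.2))
    (C₀ δ₀ : ℝ) (hC₀ : 0 < C₀) (hδ₀ : 0 < δ₀)
    (hfcube : ∀ x w : Ed d, ‖w‖ ≤ δ₀ → |f x w| ≤ C₀ * ‖w‖ ^ 3)
    (L1 : Ed d → Ed d → ℝ)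
    (hL1 : ∀ x v : Ed d,
      L1 x v = (1 / 2 : ℝ) * (inner ℝ (A x (v - ω)) (v - ω) : ℝ) + f x (v - ω))
    (hpos : ∀ x v w : Ed d, w ≠ 0 →
      0 < iteratedFDeriv ℝ 2 (fun v' => L1 x v') v ![w, w])
    (u : Ed d → ℝ) (hu : Continuous u) (huper : IsZdPeriodic u)
    (x : Ed d) :
    Filter.Tendsto (fun t : ℝ => LOa L1 u t x) Filter.atTop (nhds (⨅ y : Ed d, u y)) := by
  obtain ⟨y₀, hy₀⟩ := huper.exists_forall_le hu
  have hAnorm_per : IsZdPeriodic fun z => ‖A z‖ := fun z k => by simp only [hAper]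
  obtain ⟨M, hM⟩ := (hAnorm_per.isCompact_range (continuous_norm.comp hA.continuous)).bddAbove
  have hAM : ∀ z, ‖A z‖ ≤ M := fun z => hM ⟨z, rfl⟩
  have hM₀ : 0 ≤ M := (norm_nonneg _).trans (hAM 0)
  have hL1_nonneg : ∀ z v, 0 ≤ L1 z v :=
    lagrangian_nonneg hL1 (fun z => hf.comp (contDiff_const.prodMk contDiff_id)) hfcube hC₀.le
      hδ₀ hpos
  have hL1_le : ∀ z v, ‖v - ω‖ ≤ δ₀ → L1 z v ≤ (M / 2 + C₀ * δ₀) * ‖v - ω‖ ^ 2 :=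
    fun z v hv => (le_abs_self _).trans <|
      (lagrangian_abs_le hL1 hfcube hC₀.le z hv).trans (by gcongr; exact hAM z)
  rw [ciInf_eq_of_forall_ge_of_forall_gt_exists_lt hy₀ fun _ hw => ⟨y₀, hw⟩]
  have hupper := (tendsto_const_nhds (x := u y₀)).add
    ((tendsto_const_nhds (x := (M / 2 + C₀ * δ₀) * Real.sqrt d ^ 2)).div_atTop tendsto_id)
  rw [add_zero] at hupper
  refine tendsto_of_tendsto_of_tendsto_of_le_of_le' tendsto_const_nhds hupper ?_ ?_
  · filter_upwards [eventually_ge_atTop 0] with t ht using le_LOa_s16 hL1_nonneg hy₀ ht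
  · filter_upwards [eventually_gt_atTop 0, eventually_ge_atTop (Real.sqrt d / δ₀)] with t ht htR
    obtain ⟨k, hk⟩ := exists_norm_sub_intVec_le_sqrt (x - t • ω - y₀)
    rw [← huper y₀ k]
    exact LOa_le_add_div hL1_nonneg (continuous_uncurry_lagrangian hL1 hA.continuous hf.continuous)
      hy₀ (by positivity) hL1_le ht ((div_le_iff₀ hδ₀).1 htR) (by rwa [sub_sub] at hk)

/-- for the Lagrangian `L¹ₐ`, `Tᵃ_t u (x) → min u` as `t → +∞`. -/
theorem LOa_tendsto_min
    {d : ℕ} (hd : 1 ≤ d) (ω : Ed d) (hω : ‖ω‖ = 1)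
    (A : Ed d → Ed d →L[ℝ] Ed d) (hA : ContDiff ℝ 2 A)
    (hAper : ∀ (x : Ed d) (k : Fin d → ℤ), A (x + intVec d k) = A x)
    (hAsymm : ∀ x v w : Ed d, (inner ℝ (A x v) w : ℝ) = (inner ℝ v (A x w) : ℝ))
    (f : Ed d → Ed d → ℝ) (hf : ContDiff ℝ 2 (fun p : Ed d × Ed d => f p.1 p.2))
    (hfper : ∀ (x w : Ed d) (k : Fin d → ℤ), f (x + intVec d k) w = f x w)
    (C₀ δ₀ : ℝ) (hC₀ : 0 < C₀) (hδ₀ : 0 < δ₀)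
    (hfcube : ∀ x w : Ed d, ‖w‖ ≤ δ₀ → |f x w| ≤ C₀ * ‖w‖ ^ 3)
    (L1 : Ed d → Ed d → ℝ)
    (hL1 : ∀ x v : Ed d,
      L1 x v = (1 / 2 : ℝ) * (inner ℝ (A x (v - ω)) (v - ω) : ℝ) + f x (v - ω))
    (hpos : ∀ x v w : Ed d, w ≠ 0 →
      0 < iteratedFDeriv ℝ 2 (fun v' => L1 x v') v ![w, w])
    (hsl : ∀ A₀ : ℝ, 0 ≤ A₀ → ∃ B : ℝ, ∀ x v : Ed d, A₀ * ‖v‖ - B ≤ L1 x v)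
    (u : Ed d → ℝ) (hu : Continuous u) (huper : IsZdPeriodic u)
    (x : Ed d) :
    Filter.Tendsto (fun t : ℝ => LOa L1 u t x) Filter.atTop (nhds (⨅ y : Ed d, u y)) :=
  LOa_tendsto_min_general ω A hA hAper f hf C₀ δ₀ hC₀ hδ₀ hfcube L1 hL1 hpos u hu huper x
end
end
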